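/- arXiv:2604.16701 — 5 statements merged into one kernel-verified Lean document; each statement's English description precedes it below -/
import Mathlib

section
/- Let m be a finite index type, let U be a unitary m×m complex matrix, and let n ≥ 1 be a natural number with U^n = 1. Define the cyclic twirl of an m×m complex matrix A by T(A) = (1/n) · Σ_{j=0}^{n−1} U^j · A · (Uᴴ)^j. Then for all m×m complex matrices P and P' one has T(P)·T(P') − T(P')·T(P) = (1/n) · Σ_{k=0}^{n−1} T( P·(U^k · P' · (Uᴴ)^k) − (U^k · P' · (Uᴴ)^k)·P ). (This is the Pauli-cycle commutator identity: the commutator of two twirled operators equals the average over relative shifts of the twirled pairwise commutators.) -/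
open Matrix

open Finset

/-- The cyclic twirl of a matrix `A` with respect to a unitary `U` of order dividing `n`:
`T(A) = (1/n) · Σ_{j=0}^{n−1} U^j · A · (Uᴴ)^j`. -/
noncomputable def cyclicTwirl {m : Type*} [Fintype m] [DecidableEq m] (U : Matrix m m ℂ) (n : ℕ)
    (A : Matrix m m ℂ) : Matrix m m ℂ :=
  (1 / (n : ℂ)) • ∑ j ∈ Finset.range n, U ^ j * A * (Uᴴ) ^ j

/-- The Pauli-cycle commutator identity: the commutator of two twirled operators equals the
average over relative shifts of the twirled pairwise commutators. -/
theorem cyclicTwirl_commutator {m : Type*} [Fintype m] [DecidableEq m]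
    (U : Matrix m m ℂ) (hU : Uᴴ * U = 1 ∧ U * Uᴴ = 1)
    (n : ℕ) (hn : 1 ≤ n) (hUn : U ^ n = 1) (P P' : Matrix m m ℂ) :
    cyclicTwirl U n P * cyclicTwirl U n P' - cyclicTwirl U n P' * cyclicTwirl U n P =
      (1 / (n : ℂ)) • ∑ k ∈ Finset.range n,
        cyclicTwirl U n
          (P * (U ^ k * P' * (Uᴴ) ^ k) - (U ^ k * P' * (Uᴴ) ^ k) * P) := by
  obtain ⟨h1, h2⟩ := hU
  -- inverse lemmas
  have hinvL : ∀ j : ℕ, (Uᴴ) ^ j * U ^ j = 1 := by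
    intro j
    induction j with
    | zero => simp
    | succ j ih =>
      rw [pow_succ, pow_succ', mul_assoc, ← mul_assoc Uᴴ, h1, one_mul, ih]
  have hUHn : (Uᴴ) ^ n = 1 := by
    rw [← conjTranspose_pow, hUn, conjTranspose_one]
  -- the conjugation family
  set g : ℕ → Matrix m m ℂ := fun i => U ^ i * P' * (Uᴴ) ^ i with hg
  have hper : ∀ i, g (i + n) = g i := by
    intro i
    simp only [hg, pow_add, hUn, hUHn, mul_one, one_mul]
  have hshift : ∀ j : ℕ, ∑ k ∈ Finset.range n, g (j + k) = ∑ i ∈ Finset.range n, g i := by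
    intro j
    induction j with
    | zero => simp
    | succ j ih =>
      obtain ⟨m', rfl⟩ : ∃ m', n = m' + 1 := ⟨n - 1, (Nat.succ_pred_eq_of_pos hn).symm⟩
      rw [← ih, Finset.sum_range_succ, Finset.sum_range_succ']
      have : g (j + 1 + m') = g j := by
        have := hper j
        rwa [show j + (m' + 1) = j + 1 + m' by ring] at this
      rw [this]
      congr 1
      apply Finset.sum_congr rfl
      intro k _
      rw [show j + 1 + k = j + (k + 1) from by ring]
  have cancel : ∀ (j : ℕ) (X : Matrix m m ℂ), (Uᴴ) ^ j * (U ^ j * X) = X := by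
    intro j X
    rw [← mul_assoc, hinvL j, one_mul]
  have key1 : ∀ j k : ℕ, U ^ j * (P * g k) * (Uᴴ) ^ j =
      (U ^ j * P * (Uᴴ) ^ j) * g (j + k) := by
    intro j k
    simp only [hg, pow_add]
    have : (Uᴴ) ^ (j + k) = (Uᴴ) ^ k * (Uᴴ) ^ j := by rw [← pow_add, add_comm]
    rw [show ((Uᴴ) ^ j * (Uᴴ) ^ k : Matrix m m ℂ) = (Uᴴ) ^ k * (Uᴴ) ^ j from by
      rw [← pow_add, ← pow_add, add_comm]]
    simp only [mul_assoc, cancel]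
  have key2 : ∀ j k : ℕ, U ^ j * (g k * P) * (Uᴴ) ^ j =
      g (j + k) * (U ^ j * P * (Uᴴ) ^ j) := by
    intro j k
    simp only [hg, pow_add]
    rw [show ((Uᴴ) ^ j * (Uᴴ) ^ k : Matrix m m ℂ) = (Uᴴ) ^ k * (Uᴴ) ^ j from by
      rw [← pow_add, ← pow_add, add_comm]]
    simp only [mul_assoc, cancel]
  -- reduce to unscaled identity
  simp only [cyclicTwirl]
  rw [Matrix.smul_mul, Matrix.mul_smul, Matrix.smul_mul, Matrix.mul_smul, smul_smul, smul_smul,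
    ← smul_sub, ← Finset.smul_sum, smul_smul]
  congr 1
  -- main sum identity
  have expand : ∀ k : ℕ,
      ∑ j ∈ Finset.range n, U ^ j * (P * g k - g k * P) * (Uᴴ) ^ j =
      ∑ j ∈ Finset.range n, ((U ^ j * P * (Uᴴ) ^ j) * g (j + k)
        - g (j + k) * (U ^ j * P * (Uᴴ) ^ j)) := by
    intro k
    apply Finset.sum_congr rfl
    intro j _
    rw [Matrix.mul_sub, Matrix.sub_mul, key1, key2]
  calc (∑ j ∈ Finset.range n, U ^ j * P * (Uᴴ) ^ j) *
        (∑ j ∈ Finset.range n, U ^ j * P' * (Uᴴ) ^ j) -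
      (∑ j ∈ Finset.range n, U ^ j * P' * (Uᴴ) ^ j) *
        (∑ j ∈ Finset.range n, U ^ j * P * (Uᴴ) ^ j)
      = ∑ j ∈ Finset.range n, ((U ^ j * P * (Uᴴ) ^ j) * (∑ i ∈ Finset.range n, g i)
          - (∑ i ∈ Finset.range n, g i) * (U ^ j * P * (Uᴴ) ^ j)) := by
        rw [Finset.sum_sub_distrib, Finset.sum_mul, Finset.mul_sum]
    _ = ∑ j ∈ Finset.range n, ∑ k ∈ Finset.range n,
          ((U ^ j * P * (Uᴴ) ^ j) * g (j + k) - g (j + k) * (U ^ j * P * (Uᴴ) ^ j)) := by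
        apply Finset.sum_congr rfl
        intro j _
        rw [Finset.sum_sub_distrib, ← Finset.mul_sum, ← Finset.sum_mul, hshift j]
    _ = ∑ k ∈ Finset.range n, ∑ j ∈ Finset.range n,
          ((U ^ j * P * (Uᴴ) ^ j) * g (j + k) - g (j + k) * (U ^ j * P * (Uᴴ) ^ j)) :=
        Finset.sum_comm
    _ = ∑ k ∈ Finset.range n,
          ∑ j ∈ Finset.range n, U ^ j * (P * g k - g k * P) * (Uᴴ) ^ j := by
        apply Finset.sum_congr rfl
        intro k _
        rw [expand k]
    _ = _ := by
        apply Finset.sum_congr rfl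
        intro k _
        rfl
end

section
/- Fix n ≥ 1 and Pauli letter assignments f, g : Fin n → {I,X,Y,Z}. For k ∈ Fin n let g_k denote the cyclically shifted assignment g_k(t) = g(t − k), subtraction taken modulo n. Then: (i) if supp(f) ∩ supp(g) = ∅, the Pauli strings commute, M_f · M_g = M_g · M_f; and (ii) the set {k ∈ Fin n : M_f · M_{g_k} ≠ M_{g_k} · M_f} has cardinality at most w_f · w_g. -/
open Matrix

open Finset

/-- The four Pauli letters `I, X, Y, Z`. -/
inductive PauliLetter : Type
  | I | X | Y | Z
  deriving DecidableEq

instance : Fintype PauliLetter where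
  elems := {.I, .X, .Y, .Z}
  complete := fun x => by cases x <;> simp

/-- The 2×2 complex matrix associated to a Pauli letter. -/
def PauliLetter.toMatrix : PauliLetter → Matrix (Fin 2) (Fin 2) ℂ
  | .I => !![1, 0; 0, 1]
  | .X => !![0, 1; 1, 0]
  | .Y => !![0, -Complex.I; Complex.I, 0]
  | .Z => !![1, 0; 0, -1]

/-- The Pauli string associated to a Pauli letter assignment `f : Fin n → PauliLetter`,
given entrywise as the `n`-fold Kronecker product of the single-site matrices. -/
def pauliString {n : ℕ} (f : Fin n → PauliLetter) :
    Matrix (Fin n → Fin 2) (Fin n → Fin 2) ℂ :=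
  Matrix.of fun x y => ∏ t, (f t).toMatrix (x t) (y t)

/-- The support of a Pauli letter assignment: the set of sites carrying a non-identity letter. -/
def pauliSupport {n : ℕ} (f : Fin n → PauliLetter) : Finset (Fin n) :=
  univ.filter fun t => f t ≠ PauliLetter.I

/-!
A product of Kronecker products is computed site by site, so `M_f` and `M_g` commute as soon as
the letters commute at every site; this happens wherever one of them is `I`. Hence `M_f` and
`M_{g_k}` can fail to commute only if `t ∈ supp f` and `t - k ∈ supp g` for some site `t`, that
is, only for `k` in the difference set `supp f - supp g`, which has at most `w_f · w_g` elements.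
-/

open scoped Pointwise

theorem PauliLetter.toMatrix_I : PauliLetter.I.toMatrix = 1 := by
  rw [PauliLetter.toMatrix, Matrix.one_fin_two]

theorem mem_pauliSupport {n : ℕ} {f : Fin n → PauliLetter} {t : Fin n} :
    t ∈ pauliSupport f ↔ f t ≠ PauliLetter.I := by
  simp [pauliSupport]

theorem pauliString_mul_apply {n : ℕ} (f g : Fin n → PauliLetter) (x y : Fin n → Fin 2) :
    (pauliString f * pauliString g) x y =
      ∏ t, ((f t).toMatrix * (g t).toMatrix) (x t) (y t) := by
  simp only [pauliString, Matrix.mul_apply, Matrix.of_apply, ← Finset.prod_mul_distrib]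
  rw [Finset.prod_univ_sum, Fintype.piFinset_univ]

theorem pauliString_commute {n : ℕ} {f g : Fin n → PauliLetter}
    (h : ∀ t, Commute (f t).toMatrix (g t).toMatrix) :
    Commute (pauliString f) (pauliString g) := by
  ext x y
  rw [pauliString_mul_apply, pauliString_mul_apply]
  exact Finset.prod_congr rfl fun t _ => by rw [(h t).eq]

theorem pauliString_commute_of_disjoint {n : ℕ} {f g : Fin n → PauliLetter}
    (h : Disjoint (pauliSupport f) (pauliSupport g)) :
    Commute (pauliString f) (pauliString g) := by
  refine pauliString_commute fun t => ?_
  by_cases hf : f t = PauliLetter.I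
  · rw [hf, PauliLetter.toMatrix_I]
    exact Commute.one_left _
  · have hg : g t = PauliLetter.I := by
      by_contra hg
      exact Finset.disjoint_left.1 h (mem_pauliSupport.2 hf) (mem_pauliSupport.2 hg)
    rw [hg, PauliLetter.toMatrix_I]
    exact Commute.one_right _

theorem disjoint_pauliSupport_shift {n : ℕ} [NeZero n] {f g : Fin n → PauliLetter} {k : Fin n}
    (hk : k ∉ pauliSupport f - pauliSupport g) :
    Disjoint (pauliSupport f) (pauliSupport fun t => g (t - k)) :=
  Finset.disjoint_left.2 fun t hf hg =>
    hk (Finset.mem_sub.2 ⟨t, hf, t - k, by simpa [mem_pauliSupport] using hg,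
      sub_sub_cancel t k⟩)

theorem ncard_not_commute_pauliString_shift_le {n : ℕ} (f g : Fin n → PauliLetter) :
    {k : Fin n | ¬Commute (pauliString f) (pauliString fun t => g (t - k))}.ncard ≤
      (pauliSupport f).card * (pauliSupport g).card := by
  cases n with
  | zero => simp [Set.eq_empty_of_isEmpty]
  | succ n =>
    calc _ ≤ (pauliSupport f - pauliSupport g : Finset (Fin (n + 1))).card := by
          rw [← Set.ncard_coe_finset]
          refine Set.ncard_le_ncard (fun k hk => ?_) (Finset.finite_toSet _)
          by_contra hk'
          exact hk (pauliString_commute_of_disjoint (disjoint_pauliSupport_shift hk'))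
      _ ≤ (pauliSupport f).card * (pauliSupport g).card := Finset.card_sub_le

theorem pauliString_shift_commute_general {n : ℕ} (f g : Fin n → PauliLetter) :
    (pauliSupport f ∩ pauliSupport g = ∅ →
      pauliString f * pauliString g = pauliString g * pauliString f) ∧
    {k : Fin n | pauliString f * pauliString (fun t => g (t - k)) ≠
        pauliString (fun t => g (t - k)) * pauliString f}.ncard ≤
      (pauliSupport f).card * (pauliSupport g).card :=
  ⟨fun h => pauliString_commute_of_disjoint (Finset.disjoint_iff_inter_eq_empty.2 h),
    ncard_not_commute_pauliString_shift_le f g⟩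

/-- (i) Pauli strings with disjoint supports commute, and (ii) for `g` cyclically shifted by
`k`, the set of shifts `k` for which `M_f` and `M_{g_k}` fail to commute has cardinality at most
`w_f · w_g`. -/
theorem pauliString_shift_commute {n : ℕ} (hn : 1 ≤ n) (f g : Fin n → PauliLetter) :
    (pauliSupport f ∩ pauliSupport g = ∅ →
      pauliString f * pauliString g = pauliString g * pauliString f) ∧
    {k : Fin n | pauliString f * pauliString (fun t => g (t - k)) ≠
        pauliString (fun t => g (t - k)) * pauliString f}.ncard ≤
      (pauliSupport f).card * (pauliSupport g).card :=
  pauliString_shift_commute_general f g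
end

section
/- For every n ≥ 1, the permutation-invariant algebra g^PI, i.e. the ℂ-subspace of 2^n × 2^n complex matrices A satisfying A · U_π = U_π · A for every permutation π of Fin n, has ℂ-dimension C(n+3, 3). -/
open Matrix

open Finset

/-- The permutation unitary `U_π` on `n` qubits: `(U_π)_{x,y} = 1` if `y = x ∘ π`, else `0`. -/
def permUnitary (n : ℕ) (π : Equiv.Perm (Fin n)) :
    Matrix (Fin n → Fin 2) (Fin n → Fin 2) ℂ :=
  Matrix.of fun x y => if y = x ∘ π then 1 else 0

/-- The permutation-invariant algebra `g^PI`: the ℂ-subspace of `2^n × 2^n` matrices commuting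
with every permutation unitary. -/
noncomputable def gPI (n : ℕ) : Submodule ℂ (Matrix (Fin n → Fin 2) (Fin n → Fin 2) ℂ) where
  carrier := {A | ∀ π : Equiv.Perm (Fin n), A * permUnitary n π = permUnitary n π * A}
  add_mem' := by
    intro A B hA hB π
    rw [Matrix.add_mul, Matrix.mul_add, hA π, hB π]
  zero_mem' := by
    intro π
    rw [Matrix.zero_mul, Matrix.mul_zero]
  smul_mem' := by
    intro c A hA π
    rw [Matrix.smul_mul, Matrix.mul_smul, hA π]

/-!
A matrix commutes with every `U_π` iff its entry `A x y` only depends on the orbit of the pair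
`(x, y)` under simultaneous permutation of the qubits. Reading `(x, y)` as the word
`i ↦ (x i, y i)` over the four-letter alphabet `Fin 2 × Fin 2`, these orbits are the multisets
of size `n` over that alphabet, so `g^PI ≅ ℂ^{Sym (Fin 2 × Fin 2) n}`, of dimension
`multichoose 4 n = C(n + 3, 3)`.
-/

section SymOfFn

variable {β : Type*} {n : ℕ}

def symOfFn (f : Fin n → β) : Sym β n :=
  ⟨List.ofFn f, by simp⟩

theorem symOfFn_comp_perm (f : Fin n → β) (σ : Equiv.Perm (Fin n)) :
    symOfFn (f ∘ σ) = symOfFn f :=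
  Subtype.ext <| Multiset.coe_eq_coe.mpr (σ.ofFn_comp_perm f)

theorem symOfFn_surjective : Function.Surjective (symOfFn : (Fin n → β) → Sym β n) := by
  rintro ⟨m, hm⟩
  induction m using Quotient.inductionOn with
  | h l =>
    rw [Multiset.quot_mk_to_coe, Multiset.coe_card] at hm
    subst hm
    exact ⟨l.get, Subtype.ext <| congrArg ((↑) : List β → Multiset β) (List.ofFn_get l)⟩

theorem card_fiber_eq_of_symOfFn_eq [DecidableEq β] {f g : Fin n → β}
    (h : symOfFn f = symOfFn g) (b : β) :
    Fintype.card {i // f i = b} = Fintype.card {i // g i = b} := by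
  have hcount := congrArg (fun s : Sym β n => Multiset.count b s) h
  simp only [symOfFn, ← Fin.univ_val_map, Sym.coe_mk, Multiset.count_map] at hcount
  simp only [Fintype.card_subtype, @eq_comm _ (f _), @eq_comm _ (g _)]
  exact hcount

theorem exists_perm_of_symOfFn_eq {f g : Fin n → β} (h : symOfFn f = symOfFn g) :
    ∃ σ : Equiv.Perm (Fin n), f = g ∘ σ := by
  classical
  let e b := Fintype.equivOfCardEq (card_fiber_eq_of_symOfFn_eq h b)
  exact ⟨Equiv.ofFiberEquiv e, funext fun i => (Equiv.ofFiberEquiv_map e i).symm⟩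

end SymOfFn

section PermUnitary

variable {n : ℕ} (π : Equiv.Perm (Fin n)) (A : Matrix (Fin n → Fin 2) (Fin n → Fin 2) ℂ)
  (x y : Fin n → Fin 2)

theorem permUnitary_mul_apply : (permUnitary n π * A) x y = A (x ∘ π) y := by
  simp [permUnitary, Matrix.mul_apply]

theorem mul_permUnitary_apply : (A * permUnitary n π) x y = A x (y ∘ π.symm) := by
  simp [permUnitary, Matrix.mul_apply, @eq_comm _ y, ← Equiv.eq_comp_symm]

end PermUnitary

theorem mem_gPI_iff {n : ℕ} {A : Matrix (Fin n → Fin 2) (Fin n → Fin 2) ℂ} :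
    A ∈ gPI n ↔ ∀ (σ : Equiv.Perm (Fin n)) x y, A (x ∘ σ) (y ∘ σ) = A x y := by
  change (∀ π, A * permUnitary n π = permUnitary n π * A) ↔ _
  simp only [← Matrix.ext_iff, mul_permUnitary_apply, permUnitary_mul_apply]
  refine forall_congr' fun σ => ⟨fun h x y => ?_, fun h x y => ?_⟩
  · simpa [Function.comp_assoc] using (h x (y ∘ σ)).symm
  · simpa [Function.comp_assoc] using (h x (y ∘ σ.symm)).symm

theorem apply_eq_of_mem_gPI {n : ℕ} {A : Matrix (Fin n → Fin 2) (Fin n → Fin 2) ℂ}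
    (hA : A ∈ gPI n) {x y x' y' : Fin n → Fin 2}
    (h : symOfFn (fun i => (x i, y i)) = symOfFn (fun i => (x' i, y' i))) :
    A x y = A x' y' := by
  obtain ⟨σ, hσ⟩ := exists_perm_of_symOfFn_eq h
  have hx : x = x' ∘ σ := funext fun i => congrArg Prod.fst (congrFun hσ i)
  have hy : y = y' ∘ σ := funext fun i => congrArg Prod.snd (congrFun hσ i)
  rw [hx, hy]
  exact mem_gPI_iff.mp hA σ x' y'

section SymLift

variable {α R : Type*} [Semiring R] (n : ℕ)

def symLift : (Sym (α × α) n → R) →ₗ[R] Matrix (Fin n → α) (Fin n → α) R where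
  toFun F := Matrix.of fun x y => F (symOfFn fun i => (x i, y i))
  map_add' _ _ := rfl
  map_smul' _ _ := rfl

theorem symLift_injective : Function.Injective (symLift (α := α) (R := R) n) := by
  intro F G h
  funext s
  obtain ⟨w, rfl⟩ := symOfFn_surjective s
  exact congrFun (congrFun h (Prod.fst ∘ w)) (Prod.snd ∘ w)

end SymLift

theorem range_symLift (n : ℕ) : LinearMap.range (symLift (α := Fin 2) (R := ℂ) n) = gPI n := by
  ext A
  constructor
  · rintro ⟨F, rfl⟩
    exact mem_gPI_iff.mpr fun σ x y => congrArg F (symOfFn_comp_perm (fun i => (x i, y i)) σ)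
  · intro hA
    let w := Function.surjInv (symOfFn_surjective (β := Fin 2 × Fin 2) (n := n))
    refine ⟨fun s => A (Prod.fst ∘ w s) (Prod.snd ∘ w s), ?_⟩
    ext x y
    exact apply_eq_of_mem_gPI hA (Function.surjInv_eq symOfFn_surjective _)

theorem gPI_finrank_general (n : ℕ) :
    Module.finrank ℂ (gPI n) = Nat.choose (n + 3) 3 := by
  rw [← range_symLift, LinearMap.finrank_range_of_inj (symLift_injective n),
    Module.finrank_fintype_fun_eq_card, Sym.card_sym_eq_choose, Fintype.card_prod,
    Fintype.card_fin, show 2 * 2 + n - 1 = n + 3 by omega, Nat.choose_symm_add]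

/-- The permutation-invariant algebra on `n ≥ 1` qubits has ℂ-dimension `C(n+3, 3)`. -/
theorem gPI_finrank (n : ℕ) (hn : 1 ≤ n) :
    Module.finrank ℂ (gPI n) = Nat.choose (n + 3) 3 :=
  gPI_finrank_general n
end

section
/- Fix n ≥ 1. For j ∈ Fin n, define Pauli letter assignments a_j, b_j : Fin n → {I,X,Y,Z} by a_j(t) = Z for t < j, a_j(j) = X, a_j(t) = I for t > j, and b_j(t) = Z for t < j, b_j(j) = Y, b_j(t) = I for t > j. Define the Jordan–Wigner Majorana operators γ : Fin (2n) → (2^n × 2^n complex matrices) by γ_{2j} = M_{a_j} and γ_{2j+1} = M_{b_j}. Then for all μ, ν ∈ Fin (2n): γ_μ · γ_ν + γ_ν · γ_μ = 2·δ_{μν} · 1, where δ is the Kronecker delta and 1 is the 2^n × 2^n identity matrix. (The Jordan–Wigner strings satisfy the canonical anticommutation relations of Majorana fermions.) -/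
open Matrix

open Finset

instance PauliLetter.instFintype : Fintype PauliLetter :=
  ⟨{PauliLetter.I, PauliLetter.X, PauliLetter.Y, PauliLetter.Z}, by intro x; cases x <;> simp⟩

/-- The Jordan–Wigner assignment `a_j`: `Z` on sites `t < j`, `X` at `j`, `I` afterwards. -/
def jwA (n : ℕ) (j : Fin n) : Fin n → PauliLetter := fun t =>
  if t < j then PauliLetter.Z else if t = j then PauliLetter.X else PauliLetter.I

/-- The Jordan–Wigner assignment `b_j`: `Z` on sites `t < j`, `Y` at `j`, `I` afterwards. -/
def jwB (n : ℕ) (j : Fin n) : Fin n → PauliLetter := fun t =>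
  if t < j then PauliLetter.Z else if t = j then PauliLetter.Y else PauliLetter.I

/-- The Jordan–Wigner Majorana operators: `γ_{2j} = M_{a_j}` and `γ_{2j+1} = M_{b_j}`. -/
def majorana (n : ℕ) (μ : Fin (2 * n)) :
    Matrix (Fin n → Fin 2) (Fin n → Fin 2) ℂ :=
  if μ.val % 2 = 0 then
    pauliString (jwA n ⟨μ.val / 2, by have := μ.isLt; omega⟩)
  else
    pauliString (jwB n ⟨μ.val / 2, by have := μ.isLt; omega⟩)

/-! Pauli strings multiply site by site, so two strings commute up to the product of the
single-site commutation signs; a Pauli letter squares to `I`, and two letters anticommute exactly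
when they are distinct and neither is `I`. Two distinct Jordan–Wigner strings with sites `j` and
`k` meet such a pair only at site `min j k` (`X` or `Y` against `Z`, or `X` against `Y` when
`j = k`): below it both carry `Z`, above it one of them carries `I`. Hence they anticommute,
while each of them squares to the identity. -/

namespace Matrix

variable {ι m n p R : Type*} [Fintype ι] [CommSemiring R]

/-- The entrywise form of the Kronecker product `⨂ₜ A t` over a finite index type. -/
def piKron (A : ι → Matrix m n R) : Matrix (ι → m) (ι → n) R :=
  of fun x y => ∏ t, A t (x t) (y t)

theorem piKron_mul [DecidableEq ι] [Fintype n] (A : ι → Matrix m n R) (B : ι → Matrix n p R) :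
    piKron A * piKron B = piKron fun t => A t * B t := by
  ext x y
  simp only [piKron, mul_apply, of_apply, ← prod_mul_distrib]
  rw [prod_univ_sum, ← Fintype.piFinset_univ]

theorem piKron_one [DecidableEq m] : piKron (fun _ : ι => (1 : Matrix m m R)) = 1 := by
  ext x y
  by_cases h : x = y
  · subst h
    simp [piKron]
  · obtain ⟨t, ht⟩ := Function.ne_iff.mp h
    rw [one_apply_ne h, piKron, of_apply]
    exact prod_eq_zero (mem_univ t) (one_apply_ne ht)

theorem piKron_smul (c : ι → R) (A : ι → Matrix m n R) :
    piKron (fun t => c t • A t) = (∏ t, c t) • piKron A := by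
  ext x y
  simp [piKron, prod_mul_distrib]

end Matrix

namespace PauliLetter

def commSign (p q : PauliLetter) : ℂ :=
  if p = q ∨ p = .I ∨ q = .I then 1 else -1

theorem toMatrix_mul_self (p : PauliLetter) : p.toMatrix * p.toMatrix = 1 := by
  cases p <;> ext i j <;> fin_cases i <;> fin_cases j <;>
    simp [toMatrix, mul_apply, Fin.sum_univ_two]

theorem toMatrix_mul_comm (p q : PauliLetter) :
    q.toMatrix * p.toMatrix = commSign p q • (p.toMatrix * q.toMatrix) := by
  cases p <;> cases q <;> ext i j <;> fin_cases i <;> fin_cases j <;>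
    simp [toMatrix, commSign, mul_apply, Fin.sum_univ_two]

end PauliLetter

theorem pauliString_eq_piKron {n : ℕ} (f : Fin n → PauliLetter) :
    pauliString f = piKron fun t => (f t).toMatrix :=
  rfl

theorem pauliString_mul_self {n : ℕ} (f : Fin n → PauliLetter) :
    pauliString f * pauliString f = 1 := by
  simp only [pauliString_eq_piKron, piKron_mul, PauliLetter.toMatrix_mul_self, piKron_one]

theorem pauliString_mul_comm {n : ℕ} (f g : Fin n → PauliLetter) :
    pauliString g * pauliString f =
      (∏ t, PauliLetter.commSign (f t) (g t)) • (pauliString f * pauliString g) := by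
  simp only [pauliString_eq_piKron, piKron_mul, PauliLetter.toMatrix_mul_comm (f _), piKron_smul]

def jwLetter {n : ℕ} (c : PauliLetter) (j : Fin n) : Fin n → PauliLetter := fun t =>
  if t < j then .Z else if t = j then c else .I

theorem commSign_jwLetter {n : ℕ} {c d : PauliLetter} (hc : c = .X ∨ c = .Y)
    (hd : d = .X ∨ d = .Y) {j k : Fin n} (h : ¬(c = d ∧ j = k)) (t : Fin n) :
    PauliLetter.commSign (jwLetter c j t) (jwLetter d k t) = if t = min j k then -1 else 1 := by
  rcases hc with rfl | rfl <;> rcases hd with rfl | rfl <;>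
    simp only [jwLetter, min_def] <;> split_ifs <;> simp_all [PauliLetter.commSign] <;> omega

theorem prod_commSign_jwLetter {n : ℕ} {c d : PauliLetter} (hc : c = .X ∨ c = .Y)
    (hd : d = .X ∨ d = .Y) {j k : Fin n} (h : ¬(c = d ∧ j = k)) :
    ∏ t, PauliLetter.commSign (jwLetter c j t) (jwLetter d k t) = -1 := by
  simp [commSign_jwLetter hc hd h]

theorem pauliString_jwLetter_anticomm {n : ℕ} {c d : PauliLetter} (hc : c = .X ∨ c = .Y)
    (hd : d = .X ∨ d = .Y) {j k : Fin n} (h : ¬(c = d ∧ j = k)) :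
    pauliString (jwLetter d k) * pauliString (jwLetter c j) =
      -(pauliString (jwLetter c j) * pauliString (jwLetter d k)) := by
  rw [pauliString_mul_comm, prod_commSign_jwLetter hc hd h, neg_one_smul]

def majoranaLetter {n : ℕ} (μ : Fin (2 * n)) : PauliLetter :=
  if μ.val % 2 = 0 then .X else .Y

def majoranaSite {n : ℕ} (μ : Fin (2 * n)) : Fin n :=
  ⟨μ.val / 2, by omega⟩

theorem majoranaLetter_eq_X_or_Y {n : ℕ} (μ : Fin (2 * n)) :
    majoranaLetter μ = .X ∨ majoranaLetter μ = .Y := by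
  unfold majoranaLetter
  split_ifs <;> simp

theorem majorana_eq_pauliString_jwLetter (n : ℕ) (μ : Fin (2 * n)) :
    majorana n μ = pauliString (jwLetter (majoranaLetter μ) (majoranaSite μ)) := by
  unfold majorana majoranaLetter
  split_ifs <;> rfl

theorem eq_of_majoranaLetter_eq_of_majoranaSite_eq {n : ℕ} {μ ν : Fin (2 * n)}
    (hl : majoranaLetter μ = majoranaLetter ν) (hs : majoranaSite μ = majoranaSite ν) : μ = ν := by
  simp only [majoranaLetter, majoranaSite, Fin.mk.injEq] at hl hs
  ext
  split_ifs at hl <;> omega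

theorem majorana_anticommutation_general (n : ℕ) (μ ν : Fin (2 * n)) :
    majorana n μ * majorana n ν + majorana n ν * majorana n μ =
      (if μ = ν then (2 : ℂ) else 0) •
        (1 : Matrix (Fin n → Fin 2) (Fin n → Fin 2) ℂ) := by
  by_cases hμν : μ = ν
  · rw [if_pos hμν, hμν, majorana_eq_pauliString_jwLetter, pauliString_mul_self, two_smul]
  · have h : ¬(majoranaLetter μ = majoranaLetter ν ∧ majoranaSite μ = majoranaSite ν) :=
      fun ⟨hl, hs⟩ => hμν (eq_of_majoranaLetter_eq_of_majoranaSite_eq hl hs)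
    rw [if_neg hμν, zero_smul, majorana_eq_pauliString_jwLetter, majorana_eq_pauliString_jwLetter,
      pauliString_jwLetter_anticomm (majoranaLetter_eq_X_or_Y μ) (majoranaLetter_eq_X_or_Y ν) h,
      add_neg_cancel]

/-- The Jordan–Wigner strings satisfy the canonical anticommutation relations of Majorana
fermions: `γ_μ γ_ν + γ_ν γ_μ = 2 δ_{μν} 1`. -/
theorem majorana_anticommutation (n : ℕ) (hn : 1 ≤ n) (μ ν : Fin (2 * n)) :
    majorana n μ * majorana n ν + majorana n ν * majorana n μ =
      (if μ = ν then (2 : ℂ) else 0) •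
        (1 : Matrix (Fin n → Fin 2) (Fin n → Fin 2) ℂ) :=
  majorana_anticommutation_general n μ ν
end

section
/- Let m be a finite nonempty type and A ∈ Matrix m m ℂ. Let ad_A denote the continuous ℂ-linear endomorphism of Matrix m m ℂ given by ad_A(C) = A·C − C·A. Then for every B ∈ Matrix m m ℂ, exp(A) · B · exp(−A) = (exp(ad_A))(B), where exp denotes the exponential in the Banach algebra of m×m complex matrices and in the Banach algebra of continuous linear endomorphisms of the matrix space, respectively. (This is the adjoint-action identity underlying the g-sim evolution rule: the finite adjoint action of a one-parameter gate is the exponential of its infinitesimal adjoint action.) -/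
/-! Left and right multiplication by `A` are commuting operators, and they are continuous ring
homomorphisms from the algebra and from its opposite, so they commute with `exp`. Hence
`exp (ad_A) = exp (L_A) * exp (-R_A) = L_{exp A} * R_{exp (-A)}`. -/

open Matrix

attribute [local instance] Matrix.linftyOpSemiNormedRing Matrix.linftyOpNormedRing
  Matrix.linftyOpNormedAlgebra

/-- The adjoint action `ad_A : C ↦ A·C − C·A` as a continuous ℂ-linear endomorphism of the
matrix space. -/
noncomputable def adMat {m : Type*} [Fintype m] [DecidableEq m] [Nonempty m]
    (A : Matrix m m ℂ) : Matrix m m ℂ →L[ℂ] Matrix m m ℂ :=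
  ContinuousLinearMap.mul ℂ (Matrix m m ℂ) A -
    (ContinuousLinearMap.mul ℂ (Matrix m m ℂ)).flip A

namespace ContinuousLinearMap

open NormedSpace

variable (𝕜 R : Type*) [NontriviallyNormedField 𝕜] [NormedRing R] [NormedAlgebra 𝕜 R]

noncomputable def mulLeftRingHom : R →+* R →L[𝕜] R :=
  { NonUnitalAlgHom.Lmul 𝕜 R with map_one' := ext one_mul }

noncomputable def mulRightRingHom : Rᵐᵒᵖ →+* R →L[𝕜] R where
  toFun a := (mul 𝕜 R).flip a.unop
  map_one' := ext mul_one
  map_mul' _ _ := ext fun c => (mul_assoc c _ _).symm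
  map_zero' := ext mul_zero
  map_add' _ _ := ext fun c => mul_add c _ _

variable {𝕜 R}

theorem continuous_mulLeftRingHom : Continuous (mulLeftRingHom 𝕜 R) :=
  (mul 𝕜 R).continuous

theorem continuous_mulRightRingHom : Continuous (mulRightRingHom 𝕜 R) :=
  (mul 𝕜 R).flip.continuous.comp MulOpposite.continuous_unop

theorem commute_mul_mul_flip (a b : R) : Commute (mul 𝕜 R a) ((mul 𝕜 R).flip b) :=
  ext fun c => (mul_assoc a c b).symm

variable [CompleteSpace R] [NormedAlgebra ℚ R] [NormedAlgebra ℚ (R →L[𝕜] R)]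

theorem exp_mul (a : R) : exp (mul 𝕜 R a) = mul 𝕜 R (exp a) :=
  (map_exp (mulLeftRingHom 𝕜 R) continuous_mulLeftRingHom a).symm

theorem exp_mul_flip (a : R) : exp ((mul 𝕜 R).flip a) = (mul 𝕜 R).flip (exp a) := by
  have h := map_exp (mulRightRingHom 𝕜 R) continuous_mulRightRingHom (MulOpposite.op a)
  rw [exp_op] at h
  exact h.symm

theorem exp_mul_sub_mul_flip_apply (a b : R) :
    exp (mul 𝕜 R a - (mul 𝕜 R).flip a) b = exp a * b * exp (-a) := by
  rw [sub_eq_add_neg, ← map_neg, NormedSpace.exp_add_of_commute (commute_mul_mul_flip _ _),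
    exp_mul, exp_mul_flip]
  exact (mul_assoc _ _ _).symm

end ContinuousLinearMap

/-- The adjoint-action identity underlying the g-sim evolution rule:
`exp(A) · B · exp(−A) = (exp(ad_A))(B)`; the finite adjoint action of a one-parameter gate is
the exponential of its infinitesimal adjoint action. Here `ad_A(C) = A·C − C·A`. -/
theorem exp_conj_eq_exp_adMat {m : Type*} [Fintype m] [DecidableEq m] [Nonempty m]
    (A B : Matrix m m ℂ) :
    (∀ C : Matrix m m ℂ, adMat A C = A * C - C * A) ∧
    NormedSpace.exp A * B * NormedSpace.exp (-A) =
      (@NormedSpace.exp _ _ _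
        (@NonUnitalSeminormedRing.toIsTopologicalRing _
          (@ContinuousLinearMap.toNormedRing ℂ (Matrix m m ℂ) _ _
            _).toNonUnitalNormedRing.toNonUnitalSeminormedRing) (adMat A)) B := by
  refine ⟨fun _ => rfl, ?_⟩
  -- The module and topology instances in the type of `adMat A` are not syntactically those of
  -- the local matrix norm, so instance search cannot find the normed ℚ-algebra structure of the
  -- operator space; it is obtained by unification instead.
  exact (@ContinuousLinearMap.exp_mul_sub_mul_flip_apply ℂ _ _ _ _ _ _
    (NormedAlgebra.restrictScalars ℚ ℂ _) A B).symm
end
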